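/- arXiv:2002.01220 — 2 statements merged into one kernel-verified Lean document; each statement's English description precedes it below -/
import Mathlib

section
/- Let ψ : ℝ → [0,∞) be a sublinear potential, let y > 0 with ψ(y) > 0, let O ⊂ ℝ^d be a bounded open set, and let μ ∈ M(O). Then Φ(μ) ≥ (ψ(y)/y)·‖μ‖_TV − ψ(y)·λ(O), where λ(O) denotes the Lebesgue measure of O. -/
/-!
Put `t = ψ y / y`. Convexity of `ψ` on segments from `0` (where `ψ` vanishes) and symmetry give
`t |z| ≤ ψ y + ψ z`, hence `ψ* ≤ ψ y` on `[-t, t]`; so every admissible `v` with `|v| ≤ t`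
witnesses `Φ(μ) ≥ ∫ v dμ - ψ y · λ(O)`. Split `O` along a Hahn set of `μ` and approximate each
half from inside by compact sets `Kp`, `Kn` carrying all but `ε` of `μ⁺` and `μ⁻` on `O`; an
Urysohn function equal to `1` on `Kp` and `-1` on `Kn`, supported in `O`, then has
`∫ v dμ ≥ |μ|(O) - ε`.
-/

open scoped ENNReal
open MeasureTheory

/-- The convex conjugate `f*(x) = sup_{y ∈ ℝ} (x·y − f(y))`, taking values in `[0,∞]`. -/
noncomputable def convexConj (f : ℝ → ℝ) (x : ℝ) : ℝ≥0∞ :=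
  ⨆ y : ℝ, ENNReal.ofReal (x * y - f y)

/-- Integral of a real function against a finite signed Radon measure. -/
noncomputable def sintegral {α : Type*} [MeasurableSpace α]
    (μ : MeasureTheory.SignedMeasure α) (v : α → ℝ) : ℝ :=
  ∫ x, v x ∂μ.toJordanDecomposition.posPart - ∫ x, v x ∂μ.toJordanDecomposition.negPart

/-- The Temam–Demengel functional
`Φ(μ) = sup { ∫_O v dμ − ∫_O ψ*(v) dx : v ∈ C_c(O), ψ* ∘ v ∈ L¹(O) } ∈ [0,∞]`. -/
noncomputable def Phi (d : ℕ) (ψ : ℝ → ℝ) (O : Set (EuclideanSpace ℝ (Fin d)))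
    (μ : MeasureTheory.SignedMeasure (EuclideanSpace ℝ (Fin d))) : ℝ≥0∞ :=
  ⨆ v : {v : EuclideanSpace ℝ (Fin d) → ℝ // Continuous v ∧ HasCompactSupport v ∧
      tsupport v ⊆ O ∧ (∫⁻ x in O, convexConj ψ (v x)) ≠ ⊤},
    ENNReal.ofReal (sintegral μ v.1 - (∫⁻ x in O, convexConj ψ (v.1 x)).toReal)

open Set

lemma ConvexOn.div_mul_abs_le_add {ψ : ℝ → ℝ} (hconv : ConvexOn ℝ univ ψ)
    (hnonneg : ∀ x, 0 ≤ ψ x) (h0 : ψ 0 = 0) (hsymm : ∀ x, ψ x = ψ (-x)) {y : ℝ} (hy : 0 < y)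
    (z : ℝ) : ψ y / y * |z| ≤ ψ y + ψ z := by
  have hψz : ψ |z| = ψ z := by
    rcases abs_choice z with h | h <;> rw [h]
    exact (hsymm z).symm
  rcases le_or_gt |z| y with hz | hz
  · have : ψ y / y * |z| ≤ ψ y := by
      rw [div_mul_eq_mul_div, div_le_iff₀ hy]
      exact mul_le_mul_of_nonneg_left hz (hnonneg y)
    linarith [hnonneg z]
  · have hslope : ψ y / y ≤ ψ |z| / |z| := by
      simpa [h0] using hconv.secant_mono (mem_univ 0) (mem_univ y) (mem_univ |z|) hy.ne'
        (hy.trans hz).ne' hz.le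
    have : ψ y / y * |z| ≤ ψ z := by
      calc ψ y / y * |z| ≤ ψ |z| / |z| * |z| := by gcongr
        _ = ψ z := by rw [div_mul_cancel₀ _ (hy.trans hz).ne', hψz]
    linarith [hnonneg y]

lemma convexConj_le_of_abs_le {ψ : ℝ → ℝ} (hconv : ConvexOn ℝ univ ψ)
    (hnonneg : ∀ x, 0 ≤ ψ x) (h0 : ψ 0 = 0) (hsymm : ∀ x, ψ x = ψ (-x)) {y : ℝ} (hy : 0 < y)
    {s : ℝ} (hs : |s| ≤ ψ y / y) : convexConj ψ s ≤ ENNReal.ofReal (ψ y) := by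
  refine iSup_le fun z => ENNReal.ofReal_le_ofReal ?_
  have hsz : s * z ≤ ψ y / y * |z| := by
    calc s * z ≤ |s| * |z| := by rw [← abs_mul]; exact le_abs_self _
      _ ≤ ψ y / y * |z| := by gcongr
  linarith [hconv.div_mul_abs_le_add hnonneg h0 hsymm hy z]

lemma exists_continuous_eqOn_one_eqOn_neg_one {X : Type*} [TopologicalSpace X] [T2Space X]
    [LocallyCompactSpace X] {K L O : Set X} (hK : IsCompact K) (hL : IsCompact L) (hO : IsOpen O)
    (hKO : K ⊆ O) (hLO : L ⊆ O) (hKL : Disjoint K L) :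
    ∃ v : X → ℝ, Continuous v ∧ HasCompactSupport v ∧ tsupport v ⊆ O ∧ (∀ x, |v x| ≤ 1) ∧
      EqOn v 1 K ∧ EqOn v (-1) L := by
  obtain ⟨f, hfK, hfc, hfO, hf01⟩ := exists_continuousMap_one_of_isCompact_subset_isOpen hK
    (hO.sdiff hL.isClosed) (subset_sdiff.2 ⟨hKO, hKL⟩)
  obtain ⟨g, hgL, hgc, hgO, hg01⟩ := exists_continuousMap_one_of_isCompact_subset_isOpen hL
    (hO.sdiff hK.isClosed) (subset_sdiff.2 ⟨hLO, hKL.symm⟩)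
  have hfL : EqOn f 0 L := fun x hx => image_eq_zero_of_notMem_tsupport fun h => (hfO h).2 hx
  have hgK : EqOn g 0 K := fun x hx => image_eq_zero_of_notMem_tsupport fun h => (hgO h).2 hx
  refine ⟨f - g, (f - g).continuous, HasCompactSupport.sub hfc hgc, ?_, fun x => ?_,
    fun x hx => ?_, fun x hx => ?_⟩
  · exact (tsupport_sub _ _).trans
      (union_subset (hfO.trans sdiff_subset) (hgO.trans sdiff_subset))
  · exact abs_sub_le_iff.2
      ⟨by linarith [(hf01 x).2, (hg01 x).1], by linarith [(hf01 x).1, (hg01 x).2]⟩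
  · simp [hfK hx, hgK hx]
  · simp [hfL hx, hgL hx]

lemma measureReal_sub_measureReal_sdiff_le_integral {X : Type*} [MeasurableSpace X]
    (ν : Measure X) [IsFiniteMeasure ν] {v : X → ℝ} {K O : Set X} (hK : MeasurableSet K)
    (hO : MeasurableSet O) (hv : Integrable v ν) (hvO : Function.support v ⊆ O)
    (hv1 : ∀ x, |v x| ≤ 1) (hvK : EqOn v 1 K) :
    ν.real K - ν.real (O \ K) ≤ ∫ x, v x ∂ν := by
  rw [← integral_indicator_one hK, ← integral_indicator_one (hO.diff hK),
    ← integral_sub ((integrable_const 1).indicator hK)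
      ((integrable_const 1).indicator (hO.diff hK))]
  refine integral_mono (((integrable_const 1).indicator hK).sub
    ((integrable_const 1).indicator (hO.diff hK))) hv fun x => ?_
  by_cases hxK : x ∈ K
  · simp [hxK, hvK hxK]
  by_cases hxO : x ∈ O
  · simp [hxK, hxO, (abs_le.1 (hv1 x)).1]
  · simp [hxK, hxO, Function.notMem_support.1 fun h => hxO (hvO h)]

lemma exists_isCompact_subset_measureReal_sdiff_le {X : Type*} [TopologicalSpace X]
    [T2Space X] [MeasurableSpace X] [OpensMeasurableSpace X] (ν : Measure X) [IsFiniteMeasure ν]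
    [ν.InnerRegularCompactLTTop] {A O : Set X} (hA : MeasurableSet A) (hnull : ν (O \ A) = 0)
    {δ : ℝ} (hδ : 0 < δ) : ∃ K ⊆ A, IsCompact K ∧ ν.real (O \ K) ≤ δ := by
  obtain ⟨K, hKA, hK, hAK⟩ := hA.exists_isCompact_sdiff_lt (measure_ne_top ν A)
    (ENNReal.ofReal_pos.2 hδ).ne'
  refine ⟨K, hKA, hK, ENNReal.toReal_le_of_le_ofReal hδ.le ?_⟩
  calc ν (O \ K) ≤ ν (O \ A ∪ A \ K) := measure_mono fun x ⟨hxO, hxK⟩ => by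
        by_cases hxA : x ∈ A
        · exact Or.inr ⟨hxA, hxK⟩
        · exact Or.inl ⟨hxO, hxA⟩
    _ ≤ ν (O \ A) + ν (A \ K) := measure_union_le _ _
    _ ≤ ENNReal.ofReal δ := by rw [hnull, zero_add]; exact hAK.le

lemma sintegral_const_mul {X : Type*} [MeasurableSpace X] (μ : SignedMeasure X) (c : ℝ)
    (v : X → ℝ) : sintegral μ (fun x => c * v x) = c * sintegral μ v := by
  simp only [sintegral, integral_const_mul, mul_sub]

lemma MeasureTheory.SignedMeasure.toReal_totalVariation_apply {X : Type*} [MeasurableSpace X]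
    (μ : SignedMeasure X) (s : Set X) :
    (μ.totalVariation s).toReal =
      μ.toJordanDecomposition.posPart.real s + μ.toJordanDecomposition.negPart.real s := by
  rw [SignedMeasure.totalVariation, Measure.add_apply,
    ENNReal.toReal_add (measure_ne_top _ _) (measure_ne_top _ _), measureReal_def,
    measureReal_def]

lemma MeasureTheory.SignedMeasure.exists_totalVariation_sub_le_sintegral {X : Type*}
    [MetricSpace X] [ProperSpace X] [MeasurableSpace X] [BorelSpace X] (μ : SignedMeasure X)
    {O : Set X} (hO : IsOpen O) {ε : ℝ} (hε : 0 < ε) :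
    ∃ v : X → ℝ, Continuous v ∧ HasCompactSupport v ∧ tsupport v ⊆ O ∧ (∀ x, |v x| ≤ 1) ∧
      (μ.totalVariation O).toReal - ε ≤ sintegral μ v := by
  set P := μ.toJordanDecomposition.posPart
  set N := μ.toJordanDecomposition.negPart
  obtain ⟨u, hu, hPu, hNu⟩ := μ.toJordanDecomposition.mutuallySingular
  obtain ⟨Kp, hKp, hKpc, hPKp⟩ := exists_isCompact_subset_measureReal_sdiff_le P
    (hO.measurableSet.diff hu)
    (measure_mono_null (fun x hx => by_contra fun h => hx.2 ⟨hx.1, h⟩) hPu)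
    (by positivity : 0 < ε / 4)
  obtain ⟨Kn, hKn, hKnc, hNKn⟩ := exists_isCompact_subset_measureReal_sdiff_le N
    (hO.measurableSet.inter hu) (measure_mono_null (fun x hx => fun h => hx.2 ⟨hx.1, h⟩) hNu)
    (by positivity : 0 < ε / 4)
  obtain ⟨v, hv, hvc, hvO, hv1, hvKp, hvKn⟩ :=
    exists_continuous_eqOn_one_eqOn_neg_one hKpc hKnc hO (hKp.trans sdiff_subset)
      (hKn.trans inter_subset_left) (disjoint_left.2 fun x hxp hxn => (hKp hxp).2 (hKn hxn).2)
  have hvsupp : Function.support v ⊆ O := subset_tsupport v |>.trans hvO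
  have hP := measureReal_sub_measureReal_sdiff_le_integral P hKpc.measurableSet hO.measurableSet
    (hv.integrable_of_hasCompactSupport hvc) hvsupp hv1 hvKp
  have hN := measureReal_sub_measureReal_sdiff_le_integral N hKnc.measurableSet hO.measurableSet
    (hv.integrable_of_hasCompactSupport hvc).neg (by simpa using hvsupp)
    (by simpa using hv1) (fun x hx => by simp [hvKn hx])
  have hPO := measureReal_sdiff (μ := P) (hKp.trans sdiff_subset) hKpc.measurableSet
  have hNO := measureReal_sdiff (μ := N) (hKn.trans inter_subset_left) hKnc.measurableSet
  refine ⟨v, hv, hvc, hvO, hv1, ?_⟩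
  have hNneg : ∫ x, (-v) x ∂N = -∫ x, v x ∂N := integral_neg v
  rw [SignedMeasure.toReal_totalVariation_apply, sintegral]
  linarith

lemma ofReal_sintegral_sub_le_Phi {d : ℕ} {ψ : ℝ → ℝ} (hconv : ConvexOn ℝ univ ψ)
    (hnonneg : ∀ x, 0 ≤ ψ x) (h0 : ψ 0 = 0) (hsymm : ∀ x, ψ x = ψ (-x)) {y : ℝ} (hy : 0 < y)
    {O : Set (EuclideanSpace ℝ (Fin d))} (hObd : Bornology.IsBounded O)
    (μ : SignedMeasure (EuclideanSpace ℝ (Fin d))) {v : EuclideanSpace ℝ (Fin d) → ℝ}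
    (hv : Continuous v) (hvc : HasCompactSupport v) (hvO : tsupport v ⊆ O)
    (hvy : ∀ x, |v x| ≤ ψ y / y) :
    ENNReal.ofReal (sintegral μ v - ψ y * (volume O).toReal) ≤ Phi d ψ O μ := by
  have hconj : ∫⁻ x in O, convexConj ψ (v x) ≤ ENNReal.ofReal (ψ y) * volume O :=
    (lintegral_mono fun x => convexConj_le_of_abs_le hconv hnonneg h0 hsymm hy (hvy x)).trans_eq
      (setLIntegral_const O _)
  have hfin : ENNReal.ofReal (ψ y) * volume O ≠ ⊤ :=
    ENNReal.mul_ne_top ENNReal.ofReal_ne_top hObd.measure_lt_top.ne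
  have hconjR : (∫⁻ x in O, convexConj ψ (v x)).toReal ≤ ψ y * (volume O).toReal := by
    simpa [ENNReal.toReal_mul, ENNReal.toReal_ofReal (hnonneg y)] using
      ENNReal.toReal_mono hfin hconj
  calc ENNReal.ofReal (sintegral μ v - ψ y * (volume O).toReal)
      ≤ ENNReal.ofReal (sintegral μ v - (∫⁻ x in O, convexConj ψ (v x)).toReal) := by
        gcongr
    _ ≤ Phi d ψ O μ := le_iSup_of_le ⟨v, hv, hvc, hvO, ne_top_of_le_ne_top hfin hconj⟩ le_rfl

theorem Phi_ge_TV_general (d : ℕ) (ψ : ℝ → ℝ)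
    (hconv : ConvexOn ℝ Set.univ ψ)
    (hnonneg : ∀ x, 0 ≤ ψ x) (h0 : ψ 0 = 0) (hsymm : ∀ x, ψ x = ψ (-x))
    (y : ℝ) (hy : 0 < y) (hψy : 0 < ψ y)
    (O : Set (EuclideanSpace ℝ (Fin d))) (hO : IsOpen O) (hObd : Bornology.IsBounded O)
    (μ : MeasureTheory.SignedMeasure (EuclideanSpace ℝ (Fin d))) :
    ENNReal.ofReal
        (ψ y / y * (μ.totalVariation O).toReal - ψ y * (volume O).toReal)
      ≤ Phi d ψ O μ := by
  set t := ψ y / y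
  have ht : 0 < t := div_pos hψy hy
  refine ENNReal.le_of_forall_pos_le_add fun ε hε _ => ?_
  obtain ⟨v, hv, hvc, hvO, hv1, hμv⟩ :=
    μ.exists_totalVariation_sub_le_sintegral hO (div_pos hε ht)
  have hPhi := ofReal_sintegral_sub_le_Phi hconv hnonneg h0 hsymm hy hObd μ
    (v := fun x => t * v x) (continuous_const.mul hv) hvc.mul_left
    (tsupport_mul_subset_right.trans hvO)
    fun x => by rw [abs_mul, abs_of_pos ht]; exact mul_le_of_le_one_right ht.le (hv1 x)
  rw [sintegral_const_mul] at hPhi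
  have htv : t * (μ.totalVariation O).toReal - ε ≤ t * sintegral μ v := by
    have := mul_le_mul_of_nonneg_left hμv ht.le
    rwa [mul_sub, mul_div_cancel₀ _ ht.ne'] at this
  calc ENNReal.ofReal (t * (μ.totalVariation O).toReal - ψ y * (volume O).toReal)
      ≤ ENNReal.ofReal (t * sintegral μ v - ψ y * (volume O).toReal + ε) := by
        gcongr; linarith
    _ ≤ ENNReal.ofReal (t * sintegral μ v - ψ y * (volume O).toReal) + ε := by
        simpa using ENNReal.ofReal_add_le (q := ε)
    _ ≤ Phi d ψ O μ + ε := by gcongr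

/-- Let `ψ` be a sublinear potential, `y > 0` with `ψ y > 0`,
`O ⊂ ℝ^d` a bounded open set and `μ ∈ M(O)` a finite signed Radon measure on `O`.
Then `Φ(μ) ≥ (ψ y / y) ‖μ‖_TV − ψ y · λ(O)`. -/
theorem Phi_ge_TV (d : ℕ) (ψ : ℝ → ℝ)
    (hconv : ConvexOn ℝ Set.univ ψ) (hlsc : LowerSemicontinuous ψ)
    (hnonneg : ∀ x, 0 ≤ ψ x) (h0 : ψ 0 = 0) (hsymm : ∀ x, ψ x = ψ (-x))
    (hsub : ∃ C > 0, ∀ x : ℝ, ψ x ≤ C * (1 + |x|))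
    (y : ℝ) (hy : 0 < y) (hψy : 0 < ψ y)
    (O : Set (EuclideanSpace ℝ (Fin d))) (hO : IsOpen O) (hObd : Bornology.IsBounded O)
    (μ : MeasureTheory.SignedMeasure (EuclideanSpace ℝ (Fin d)))
    (hμO : μ.totalVariation Oᶜ = 0) :
    ENNReal.ofReal
        (ψ y / y * (μ.totalVariation O).toReal - ψ y * (volume O).toReal)
      ≤ Phi d ψ O μ :=
  Phi_ge_TV_general d ψ hconv hnonneg h0 hsymm y hy hψy O hO hObd μ
end

section
/- Let ψ : ℝ → [0,∞) be convex, lower semicontinuous with ψ(0) = 0. Let O ⊂ ℝ^d be a bounded open set, h ∈ L¹(O) with extension h̄ by zero to ℝ^d, let e_0, …, e_l ∈ ℝ^d, ε > 0, and let ζ_0, …, ζ_l : ℝ^d → [0,1] be measurable with Σ_{j=0}^l ζ_j(x) = 1 for all x ∈ O and Σ_{j=0}^l ζ_j(x + ε e_j) ≤ 1 for all x ∈ O. Let ξ : ℝ^d → [0,1] be measurable with ξ(x − ε e_j) ≤ ξ(x) for every j and every x ∈ O with ζ_j(x) > 0, and with ξ(x − ε e_j) ζ_j(x) = 0 whenever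 x ∉ O. Then ∫_O ξ(x) ψ( Σ_{j=0}^l ζ_j(x + ε e_j) h̄(x + ε e_j) ) dx ≤ ∫_O ξ(x) ψ(h(x)) dx (as an inequality in [0,∞]). -/
/-!
Jensen's inequality for the subprobability weights `ζ_j(x + ε e_j)` (this is where `ψ(0) = 0`
enters) bounds the left integrand by `∑_j ξ(x) ζ_j(x + ε e_j) ψ(h̄(x + ε e_j))`. Translating the
`j`-th term by `-ε e_j` turns it into `ξ(y - ε e_j) ζ_j(y) ψ(h̄(y))`, which vanishes off `O`
because `h̄` does and `ψ(0) = 0`. On `O` the monotonicity of `ξ` along the shifts gives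
`ξ(y - ε e_j) ≤ ξ(y)` wherever `ζ_j(y) > 0`, and `∑_j ζ_j = 1` recombines the terms.
-/

open scoped ENNReal
open MeasureTheory Set

theorem ConvexOn.map_sum_le_of_sum_le_one {ι E : Type*} [AddCommGroup E] [Module ℝ E]
    {ψ : E → ℝ} (hψ : ConvexOn ℝ univ ψ) (hψ0 : ψ 0 = 0) (t : Finset ι) {w : ι → ℝ}
    (p : ι → E) (hw0 : ∀ i ∈ t, 0 ≤ w i) (hw1 : ∑ i ∈ t, w i ≤ 1) :
    ψ (∑ i ∈ t, w i • p i) ≤ ∑ i ∈ t, w i * ψ (p i) := by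
  have := hψ.map_add_sum_le (p := p) (v := 1 - ∑ i ∈ t, w i) (q := 0) hw0 (by ring)
    (fun _ _ ↦ trivial) (by linarith) trivial
  simpa [hψ0] using this

theorem ENNReal.ofReal_mul_map_sum_le {ι : Type*} {ψ : ℝ → ℝ} (hψ : ConvexOn ℝ univ ψ)
    (hψ0 : ψ 0 = 0) (hψ_nonneg : ∀ x, 0 ≤ ψ x) (t : Finset ι) {c : ℝ} (hc : 0 ≤ c)
    {w : ι → ℝ} (a : ι → ℝ) (hw0 : ∀ i ∈ t, 0 ≤ w i) (hw1 : ∑ i ∈ t, w i ≤ 1) :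
    ENNReal.ofReal (c * ψ (∑ i ∈ t, w i * a i)) ≤
      ∑ i ∈ t, ENNReal.ofReal (c * w i * ψ (a i)) := by
  have jensen := hψ.map_sum_le_of_sum_le_one hψ0 t a hw0 hw1
  simp only [smul_eq_mul] at jensen
  rw [← ENNReal.ofReal_sum_of_nonneg fun i hi ↦
    mul_nonneg (mul_nonneg hc (hw0 i hi)) (hψ_nonneg _)]
  refine ENNReal.ofReal_le_ofReal ?_
  calc c * ψ (∑ i ∈ t, w i * a i) ≤ c * ∑ i ∈ t, w i * ψ (a i) := by gcongr
    _ = ∑ i ∈ t, c * w i * ψ (a i) := by simp only [Finset.mul_sum, mul_assoc]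

theorem ENNReal.sum_ofReal_mul_le_of_sum_eq_one {ι : Type*} (t : Finset ι) {c : ι → ℝ}
    {w : ι → ℝ} {c₀ b : ℝ} (hc₀ : 0 ≤ c₀) (hb : 0 ≤ b) (hw0 : ∀ i ∈ t, 0 ≤ w i)
    (hw1 : ∑ i ∈ t, w i = 1) (hc : ∀ i ∈ t, 0 < w i → c i ≤ c₀) :
    ∑ i ∈ t, ENNReal.ofReal (c i * w i * b) ≤ ENNReal.ofReal (c₀ * b) := by
  have hterm : ∀ i ∈ t, c i * w i * b ≤ c₀ * w i * b := by
    intro i hi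
    rcases (hw0 i hi).eq_or_lt with hwi | hwi
    · simp [← hwi]
    · gcongr
      exact hc i hi hwi
  calc ∑ i ∈ t, ENNReal.ofReal (c i * w i * b)
      ≤ ∑ i ∈ t, ENNReal.ofReal (c₀ * w i * b) :=
        Finset.sum_le_sum fun i hi ↦ ENNReal.ofReal_le_ofReal (hterm i hi)
    _ = ENNReal.ofReal (c₀ * b) := by
        rw [← ENNReal.ofReal_sum_of_nonneg fun i hi ↦
          mul_nonneg (mul_nonneg hc₀ (hw0 i hi)) hb, ← Finset.sum_mul, ← Finset.mul_sum, hw1,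
          mul_one]

theorem setLIntegral_comp_add_right_le_of_support_subset {G : Type*} [MeasurableSpace G]
    [AddGroup G] [MeasurableAdd G] {μ : Measure G} [μ.IsAddRightInvariant] {s : Set G}
    {f : G → ℝ≥0∞} (hf : f.support ⊆ s) (v : G) :
    ∫⁻ x in s, f (x + v) ∂μ ≤ ∫⁻ x in s, f x ∂μ :=
  calc ∫⁻ x in s, f (x + v) ∂μ ≤ ∫⁻ x, f (x + v) ∂μ := setLIntegral_le_lintegral _ _
    _ = ∫⁻ x, f x ∂μ := lintegral_add_right_eq_self f v
    _ = ∫⁻ x in s, f x ∂μ := (setLIntegral_eq_of_support_subset hf).symm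

theorem shift_energy_estimate_general (d l : ℕ) (ψ : ℝ → ℝ)
    (hconv : ConvexOn ℝ Set.univ ψ)
    (hnonneg : ∀ x, 0 ≤ ψ x) (h0 : ψ 0 = 0)
    (O : Set (EuclideanSpace ℝ (Fin d))) (hO : IsOpen O)
    (h : EuclideanSpace ℝ (Fin d) → ℝ) (hh : IntegrableOn h O)
    (e : Fin (l + 1) → EuclideanSpace ℝ (Fin d)) (ε : ℝ)
    (ζ : Fin (l + 1) → EuclideanSpace ℝ (Fin d) → ℝ)
    (hζmeas : ∀ j, Measurable (ζ j))
    (hζ0 : ∀ j x, 0 ≤ ζ j x)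
    (hζsum : ∀ x ∈ O, ∑ j, ζ j x = 1)
    (hζsum' : ∀ x ∈ O, ∑ j, ζ j (x + ε • e j) ≤ 1)
    (ξ : EuclideanSpace ℝ (Fin d) → ℝ) (hξmeas : Measurable ξ)
    (hξ0 : ∀ x, 0 ≤ ξ x)
    (hmono : ∀ j, ∀ x ∈ O, 0 < ζ j x → ξ (x - ε • e j) ≤ ξ x) :
    (∫⁻ x in O, ENNReal.ofReal
        (ξ x * ψ (∑ j, ζ j (x + ε • e j) * Set.indicator O h (x + ε • e j))))
      ≤ ∫⁻ x in O, ENNReal.ofReal (ξ x * ψ (h x)) := by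
  set G : Fin (l + 1) → EuclideanSpace ℝ (Fin d) → ℝ≥0∞ := fun j y ↦
    ENNReal.ofReal (ξ (y - ε • e j) * ζ j y * ψ (O.indicator h y))
  have hG_meas (j) : AEMeasurable (G j) := by
    have hψ : Continuous ψ := continuousOn_univ.mp (hconv.continuousOn isOpen_univ)
    have hh_bar := (hh.integrable_indicator hO.measurableSet).aemeasurable
    exact ((((hξmeas.comp (measurable_sub_const _)).mul (hζmeas j)).aemeasurable).mul
      (hψ.measurable.comp_aemeasurable hh_bar)).ennreal_ofReal
  have hG_supp (j) : (G j).support ⊆ O := fun y hy ↦ by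
    by_contra hyO
    exact hy (by simp [G, indicator_of_notMem hyO, h0])
  calc _ ≤ ∫⁻ x in O, ∑ j, G j (x + ε • e j) := by
        refine setLIntegral_mono' hO.measurableSet fun x hx ↦ ?_
        simpa [G] using ENNReal.ofReal_mul_map_sum_le hconv h0 hnonneg Finset.univ (hξ0 x) _
          (fun j _ ↦ hζ0 j _) (hζsum' x hx)
    _ = ∑ j, ∫⁻ x in O, G j (x + ε • e j) := lintegral_finsetSum' _ fun j _ ↦
        ((hG_meas j).comp_quasiMeasurePreserving
          (measurePreserving_add_right volume (ε • e j)).quasiMeasurePreserving).restrict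
    _ ≤ ∑ j, ∫⁻ y in O, G j y := Finset.sum_le_sum fun j _ ↦
        setLIntegral_comp_add_right_le_of_support_subset (hG_supp j) _
    _ = ∫⁻ y in O, ∑ j, G j y := (lintegral_finsetSum' _ fun j _ ↦ (hG_meas j).restrict).symm
    _ ≤ ∫⁻ y in O, ENNReal.ofReal (ξ y * ψ (h y)) := by
        refine setLIntegral_mono' hO.measurableSet fun y hy ↦ ?_
        simpa [G, indicator_of_mem hy] using ENNReal.sum_ofReal_mul_le_of_sum_eq_one Finset.univ
          (hξ0 y) (hnonneg (h y)) (fun j _ ↦ hζ0 j y) (hζsum y hy) fun j _ ↦ hmono j y hy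

/-- The key cut-off estimate: shifting an `L¹` density by the
directions `e_j` with the partition of unity `ζ_j` does not increase the energy
`∫ ξ ψ(·) dx`, as an inequality in `[0,∞]`. -/
theorem shift_energy_estimate (d l : ℕ) (ψ : ℝ → ℝ)
    (hconv : ConvexOn ℝ Set.univ ψ) (hlsc : LowerSemicontinuous ψ)
    (hnonneg : ∀ x, 0 ≤ ψ x) (h0 : ψ 0 = 0)
    (O : Set (EuclideanSpace ℝ (Fin d))) (hO : IsOpen O) (hObd : Bornology.IsBounded O)
    (h : EuclideanSpace ℝ (Fin d) → ℝ) (hh : IntegrableOn h O)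
    (e : Fin (l + 1) → EuclideanSpace ℝ (Fin d)) (ε : ℝ) (hε : 0 < ε)
    (ζ : Fin (l + 1) → EuclideanSpace ℝ (Fin d) → ℝ)
    (hζmeas : ∀ j, Measurable (ζ j))
    (hζ0 : ∀ j x, 0 ≤ ζ j x) (hζ1 : ∀ j x, ζ j x ≤ 1)
    (hζsum : ∀ x ∈ O, ∑ j, ζ j x = 1)
    (hζsum' : ∀ x ∈ O, ∑ j, ζ j (x + ε • e j) ≤ 1)
    (ξ : EuclideanSpace ℝ (Fin d) → ℝ) (hξmeas : Measurable ξ)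
    (hξ0 : ∀ x, 0 ≤ ξ x) (hξ1 : ∀ x, ξ x ≤ 1)
    (hmono : ∀ j, ∀ x ∈ O, 0 < ζ j x → ξ (x - ε • e j) ≤ ξ x)
    (hvanish : ∀ j, ∀ x, x ∉ O → ξ (x - ε • e j) * ζ j x = 0) :
    (∫⁻ x in O, ENNReal.ofReal
        (ξ x * ψ (∑ j, ζ j (x + ε • e j) * Set.indicator O h (x + ε • e j))))
      ≤ ∫⁻ x in O, ENNReal.ofReal (ξ x * ψ (h x)) :=
  shift_energy_estimate_general d l ψ hconv hnonneg h0 O hO h hh e ε ζ hζmeas hζ0 hζsum hζsum' ξ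
    hξmeas hξ0 hmono
end
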